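/- arXiv:1601.03927 — 3 statements merged into one kernel-verified Lean document; each statement's English description precedes it below -/
import Mathlib

section
/- Let G be an abelian group, F ⊆ G any subset, and K ⊆ G a symmetric set containing 0 with N(F∖K, K) < ∞. Then for any real s ≥ 2 and any finite multiset T = {x₁,…,x_m} of elements of G, the quantity ms + |{(i,j) : i ≠ j, x_i − x_j ∈ F}| is at most (1 + N(F∖K, K)) · (2ms + |{(i,j) : i ≠ j, x_i − x_j ∈ K}|). -/
open scoped Pointwise Classical

noncomputable def packN {G : Type*} [AddCommGroup G] (F K : Set G) : ℕ∞ :=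
  ⨆ (S : Finset G) (_ : ↑S ⊆ F ∧ ((S : Set G) - (S : Set G)) ∩ K ⊆ {0}), (S.card : ℕ∞)

section Aux

variable {G : Type*} [AddCommGroup G]

lemma card_le_of_packN_ne_top {A K : Set G} (h : packN A K ≠ ⊤) {S : Finset G}
    (hS : ↑S ⊆ A) (hsep : ((S : Set G) - (S : Set G)) ∩ K ⊆ {0}) :
    S.card ≤ (packN A K).toNat := by
  have h1 : (S.card : ℕ∞) ≤ packN A K := by
    refine le_trans ?_ (le_iSup _ S)
    exact le_iSup (fun _ : (↑S ⊆ A ∧ ((S : Set G) - (S : Set G)) ∩ K ⊆ {0}) => (S.card : ℕ∞))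
      ⟨hS, hsep⟩
  rw [← ENat.coe_toNat h] at h1
  exact_mod_cast h1

lemma mem_K_iff_neg {K : Set G} (hKsym : -K = K) (a : G) : a ∈ K ↔ -a ∈ K := by
  conv_lhs => rw [← hKsym]
  exact Set.mem_neg

lemma cover {ι : Type*} {A K : Set G} (hKsym : -K = K) (hK0 : (0:G) ∈ K) {n : ℕ}
    (hn : ∀ S : Finset G, ↑S ⊆ A → ((S : Set G) - (S : Set G)) ∩ K ⊆ {0} → S.card ≤ n)
    (J : Finset ι) (d : ι → G) (hd : ∀ j ∈ J, d j ∈ A)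
    {c : ℕ} (hball : ∀ k ∈ J, (J.filter fun j => d j - d k ∈ K).card ≤ c + 1) :
    J.card ≤ n * (c + 1) := by
  rcases J.eq_empty_or_nonempty with rfl | ⟨j0, hj0⟩
  · simp
  set T := J.image d with hT
  set P : Finset (Finset G) :=
    T.powerset.filter (fun S => ((S : Set G) - (S : Set G)) ∩ K ⊆ {0}) with hP
  have hPne : P.Nonempty := ⟨∅, by simp [hP]⟩
  obtain ⟨S, hSP, hSmax⟩ := P.exists_max_image Finset.card hPne
  obtain ⟨hpow, hsep⟩ := Finset.mem_filter.mp hSP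
  have hsub : S ⊆ T := Finset.mem_powerset.mp hpow
  have hSA : (↑S : Set G) ⊆ A := by
    intro a ha
    obtain ⟨j, hjJ, rfl⟩ := Finset.mem_image.mp (hsub ha)
    exact hd j hjJ
  have hScard : S.card ≤ n := hn S hSA hsep
  have hcov : ∀ a ∈ T, ∃ s ∈ S, a - s ∈ K := by
    intro a ha
    by_contra hcon
    push_neg at hcon
    have haS : a ∉ S := fun h => hcon a h (by simp [hK0])
    have hins : insert a S ∈ P := by
      refine Finset.mem_filter.mpr ⟨Finset.mem_powerset.mpr (Finset.insert_subset ha hsub), ?_⟩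
      rintro z ⟨hz1, hz2⟩
      obtain ⟨u, hu, w, hw, rfl⟩ := Set.mem_sub.mp hz1
      rw [Finset.coe_insert, Set.mem_insert_iff] at hu hw
      rcases hu with rfl | hu <;> rcases hw with rfl | hw
      · simp
      · exact absurd hz2 (hcon w hw)
      · refine absurd ?_ (hcon u hu)
        rw [← neg_sub]
        exact (mem_K_iff_neg hKsym _).mp hz2
      · exact hsep ⟨Set.sub_mem_sub hu hw, hz2⟩
    have hlt : S.card < (insert a S).card := by
      rw [Finset.card_insert_of_notMem haS]; omega
    exact absurd (hSmax _ hins) (not_le.mpr hlt)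
  -- representative choice
  have hrep : ∀ sv ∈ S, ∃ k ∈ J, d k = sv := by
    intro sv hsv
    exact Finset.mem_image.mp (hsub hsv)
  choose rep hrepJ hrepd using hrep
  have hJsub : J ⊆ S.attach.biUnion
      (fun sv => J.filter fun j => d j - d (rep sv.1 sv.2) ∈ K) := by
    intro j hj
    obtain ⟨sv, hsvS, hk⟩ := hcov (d j) (Finset.mem_image_of_mem d hj)
    refine Finset.mem_biUnion.mpr ⟨⟨sv, hsvS⟩, Finset.mem_attach _ _, ?_⟩
    refine Finset.mem_filter.mpr ⟨hj, ?_⟩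
    rw [hrepd sv hsvS]
    exact hk
  calc J.card ≤ (S.attach.biUnion
      (fun sv => J.filter fun j => d j - d (rep sv.1 sv.2) ∈ K)).card :=
        Finset.card_le_card hJsub
    _ ≤ ∑ sv ∈ S.attach, (J.filter fun j => d j - d (rep sv.1 sv.2) ∈ K).card :=
        Finset.card_biUnion_le
    _ ≤ ∑ _sv ∈ S.attach, (c + 1) :=
        Finset.sum_le_sum (fun sv _ => hball _ (hrepJ sv.1 sv.2))
    _ = S.card * (c + 1) := by rw [Finset.sum_const, Finset.card_attach, smul_eq_mul]
    _ ≤ n * (c + 1) := Nat.mul_le_mul_right _ hScard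

lemma cnt_decomp {ι : Type*} (x : ι → G) (Q : Set G)
    (B : Finset ι) {v : ι} (hv : v ∈ B) :
    (∑ i ∈ B, ∑ j ∈ B, if i ≠ j ∧ x i - x j ∈ Q then 1 else 0)
      = (∑ i ∈ B.erase v, ∑ j ∈ B.erase v, if i ≠ j ∧ x i - x j ∈ Q then 1 else 0)
        + ((B.erase v).filter fun j => x v - x j ∈ Q).card
        + ((B.erase v).filter fun i => x i - x v ∈ Q).card := by
  rw [← Finset.add_sum_erase B _ hv]
  have hrow1 : (∑ j ∈ B, if v ≠ j ∧ x v - x j ∈ Q then 1 else 0)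
      = ((B.erase v).filter fun j => x v - x j ∈ Q).card := by
    rw [← Finset.add_sum_erase B _ hv, Finset.card_filter]
    rw [if_neg (by simp)]
    rw [zero_add]
    refine Finset.sum_congr rfl (fun j hj => ?_)
    have hjv : j ≠ v := (Finset.mem_erase.mp hj).1
    simp [hjv.symm]
  have hrow2 : ∀ i ∈ B.erase v, (∑ j ∈ B, if i ≠ j ∧ x i - x j ∈ Q then 1 else 0)
      = (∑ j ∈ B.erase v, if i ≠ j ∧ x i - x j ∈ Q then 1 else 0)
        + (if x i - x v ∈ Q then 1 else 0) := by
    intro i hi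
    have hiv : i ≠ v := (Finset.mem_erase.mp hi).1
    rw [← Finset.add_sum_erase B _ hv,
      if_congr (show (i ≠ v ∧ x i - x v ∈ Q) ↔ x i - x v ∈ Q by simp [hiv]) rfl rfl, add_comm]
  rw [hrow1, Finset.sum_congr rfl hrow2, Finset.sum_add_distrib]
  simp only [Finset.card_filter]
  omega

end Aux

section Main

variable {G : Type*} [AddCommGroup G]

lemma main_ineq {ι : Type*} (F K : Set G) (hKsym : -K = K) (hK0 : (0:G) ∈ K) {n : ℕ}
    (hn : ∀ S : Finset G, ↑S ⊆ F \ K → ((S : Set G) - (S : Set G)) ∩ K ⊆ {0} → S.card ≤ n)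
    (s : ℝ) (hs : 2 ≤ s) (x : ι → G) (B : Finset ι) :
    (B.card : ℝ) * s
        + ((∑ i ∈ B, ∑ j ∈ B, if i ≠ j ∧ x i - x j ∈ F then 1 else 0 : ℕ) : ℝ)
      ≤ (1 + (n : ℝ)) * (2 * B.card * s
        + ((∑ i ∈ B, ∑ j ∈ B, if i ≠ j ∧ x i - x j ∈ K then 1 else 0 : ℕ) : ℝ)) := by
  induction B using Finset.strongInduction with
  | _ B ih =>
  rcases B.eq_empty_or_nonempty with rfl | hBne
  · simp
  obtain ⟨v, hvB, hvmax⟩ := B.exists_max_image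
    (fun u => ((B.erase u).filter fun j => x u - x j ∈ K).card) hBne
  set B' := B.erase v with hB'
  have hss : B' ⊂ B := Finset.erase_ssubset hvB
  have IH := ih B' hss
  set κ := (B'.filter fun j => x v - x j ∈ K).card with hκ
  -- in-K degree equals out-K degree
  have hinK : (B'.filter fun i => x i - x v ∈ K).card = κ := by
    rw [hκ]
    congr 1
    refine Finset.filter_congr (fun j hj => ?_)
    constructor
    · intro h
      have := (mem_K_iff_neg hKsym _).mp h
      rwa [neg_sub] at this
    · intro h
      have := (mem_K_iff_neg hKsym _).mp h
      rwa [neg_sub] at this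
  -- covering bounds for F-degrees
  have hballs : ∀ k ∈ B', ∀ (J : Finset ι), J ⊆ B' →
      (J.filter fun j => x k - x j ∈ K).card ≤ κ + 1 := by
    intro k hk J hJ
    have hsub2 : (J.filter fun j => x k - x j ∈ K)
        ⊆ insert k ((B.erase k).filter fun j => x k - x j ∈ K) := by
      intro j hj
      obtain ⟨hjJ, hjK⟩ := Finset.mem_filter.mp hj
      by_cases hjk : j = k
      · exact hjk ▸ Finset.mem_insert_self _ _
      · exact Finset.mem_insert_of_mem (Finset.mem_filter.mpr
          ⟨Finset.mem_erase.mpr ⟨hjk, (Finset.mem_erase.mp (hJ hjJ)).2⟩, hjK⟩)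
    calc (J.filter fun j => x k - x j ∈ K).card
        ≤ (insert k ((B.erase k).filter fun j => x k - x j ∈ K)).card :=
          Finset.card_le_card hsub2
      _ ≤ ((B.erase k).filter fun j => x k - x j ∈ K).card + 1 := Finset.card_insert_le _ _
      _ ≤ κ + 1 := by
          have := hvmax k (Finset.mem_erase.mp hk).2
          omega
  have houtFK : ((B'.filter fun j => x v - x j ∈ F \ K).card ≤ n * (κ + 1)) := by
    refine cover hKsym hK0 hn _ (fun j => x v - x j)
      (fun j hj => (Finset.mem_filter.mp hj).2) (fun k hk => ?_)
    have hkB' : k ∈ B' := (Finset.mem_filter.mp hk).1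
    have heq : ∀ j, (x v - x j) - (x v - x k) = x k - x j := fun j => by abel
    calc ((B'.filter fun j => x v - x j ∈ F \ K).filter
            fun j => (x v - x j) - (x v - x k) ∈ K).card
        = ((B'.filter fun j => x v - x j ∈ F \ K).filter fun j => x k - x j ∈ K).card := by
          congr 1; exact Finset.filter_congr (fun j _ => by rw [heq])
      _ ≤ κ + 1 := hballs k hkB' _ (Finset.filter_subset _ _)
  have hinFK : ((B'.filter fun i => x i - x v ∈ F \ K).card ≤ n * (κ + 1)) := by
    refine cover hKsym hK0 hn _ (fun i => x i - x v)
      (fun i hi => (Finset.mem_filter.mp hi).2) (fun k hk => ?_)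
    have hkB' : k ∈ B' := (Finset.mem_filter.mp hk).1
    have heq : ∀ j, ((x j - x v) - (x k - x v) ∈ K) ↔ (x k - x j ∈ K) := by
      intro j
      have h2 : (x j - x v) - (x k - x v) = x j - x k := by abel
      rw [h2]
      constructor
      · intro h; have := (mem_K_iff_neg hKsym _).mp h; rwa [neg_sub] at this
      · intro h; have := (mem_K_iff_neg hKsym _).mp h; rwa [neg_sub] at this
    calc ((B'.filter fun i => x i - x v ∈ F \ K).filter
            fun j => (x j - x v) - (x k - x v) ∈ K).card
        = ((B'.filter fun i => x i - x v ∈ F \ K).filter fun j => x k - x j ∈ K).card := by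
          congr 1; exact Finset.filter_congr (fun j _ => heq j)
      _ ≤ κ + 1 := hballs k hkB' _ (Finset.filter_subset _ _)
  have houtF : (B'.filter fun j => x v - x j ∈ F).card ≤ κ + n * (κ + 1) := by
    have hsplit : (B'.filter fun j => x v - x j ∈ F)
        ⊆ (B'.filter fun j => x v - x j ∈ K) ∪ (B'.filter fun j => x v - x j ∈ F \ K) := by
      intro j hj
      obtain ⟨hjB, hjF⟩ := Finset.mem_filter.mp hj
      rw [Finset.mem_union]
      by_cases h : x v - x j ∈ K
      · exact Or.inl (Finset.mem_filter.mpr ⟨hjB, h⟩)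
      · exact Or.inr (Finset.mem_filter.mpr ⟨hjB, hjF, h⟩)
    calc (B'.filter fun j => x v - x j ∈ F).card
        ≤ ((B'.filter fun j => x v - x j ∈ K) ∪ (B'.filter fun j => x v - x j ∈ F \ K)).card :=
          Finset.card_le_card hsplit
      _ ≤ κ + (B'.filter fun j => x v - x j ∈ F \ K).card := by
          have := Finset.card_union_le (B'.filter fun j => x v - x j ∈ K)
            (B'.filter fun j => x v - x j ∈ F \ K)
          omega
      _ ≤ κ + n * (κ + 1) := by omega
  have hinF : (B'.filter fun i => x i - x v ∈ F).card ≤ κ + n * (κ + 1) := by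
    have hsplit : (B'.filter fun i => x i - x v ∈ F)
        ⊆ (B'.filter fun i => x i - x v ∈ K) ∪ (B'.filter fun i => x i - x v ∈ F \ K) := by
      intro j hj
      obtain ⟨hjB, hjF⟩ := Finset.mem_filter.mp hj
      rw [Finset.mem_union]
      by_cases h : x j - x v ∈ K
      · exact Or.inl (Finset.mem_filter.mpr ⟨hjB, h⟩)
      · exact Or.inr (Finset.mem_filter.mpr ⟨hjB, hjF, h⟩)
    calc (B'.filter fun i => x i - x v ∈ F).card
        ≤ ((B'.filter fun i => x i - x v ∈ K) ∪ (B'.filter fun i => x i - x v ∈ F \ K)).card :=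
          Finset.card_le_card hsplit
      _ ≤ κ + (B'.filter fun i => x i - x v ∈ F \ K).card := by
          have := Finset.card_union_le (B'.filter fun i => x i - x v ∈ K)
            (B'.filter fun i => x i - x v ∈ F \ K)
          omega
      _ ≤ κ + n * (κ + 1) := by omega
  have hdF := cnt_decomp x F B hvB
  have hdK := cnt_decomp x K B hvB
  have hcard : B.card = B'.card + 1 := (Finset.card_erase_add_one hvB).symm
  rw [hdF, hdK, hcard, hinK]
  simp only [← hB']
  rw [← hκ]
  push_cast at IH ⊢
  have hns : (0:ℝ) ≤ (n:ℝ) * (s - 2) := mul_nonneg (Nat.cast_nonneg n) (by linarith)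
  have houtF' : ((B'.filter fun j => x v - x j ∈ F).card : ℝ) ≤ κ + n * (κ + 1) := by
    exact_mod_cast houtF
  have hinF' : ((B'.filter fun i => x i - x v ∈ F).card : ℝ) ≤ κ + n * (κ + 1) := by
    exact_mod_cast hinF
  nlinarith [IH, houtF', hinF', hns, Nat.cast_nonneg (α := ℝ) n, Nat.cast_nonneg (α := ℝ) κ,
    mul_nonneg (Nat.cast_nonneg (α := ℝ) n) (Nat.cast_nonneg (α := ℝ) κ)]

end Main

theorem stmt2 {G : Type*} [AddCommGroup G] (F K : Set G)
    (hKsym : -K = K) (hK0 : (0 : G) ∈ K) (hNfin : packN (F \ K) K ≠ ⊤)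
    (s : ℝ) (hs : 2 ≤ s) (m : ℕ) (x : Fin m → G) :
    (m : ℝ) * s +
      ((Finset.univ.filter fun p : Fin m × Fin m => p.1 ≠ p.2 ∧ x p.1 - x p.2 ∈ F).card : ℝ)
    ≤ (1 + ((packN (F \ K) K).toNat : ℝ)) *
      (2 * m * s +
        ((Finset.univ.filter fun p : Fin m × Fin m => p.1 ≠ p.2 ∧ x p.1 - x p.2 ∈ K).card : ℝ)) := by

  have hn : ∀ S : Finset G, ↑S ⊆ F \ K → ((S : Set G) - (S : Set G)) ∩ K ⊆ {0} →
      S.card ≤ (packN (F \ K) K).toNat :=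
    fun S h1 h2 => card_le_of_packN_ne_top hNfin h1 h2
  have key := main_ineq F K hKsym hK0 hn s hs x (Finset.univ : Finset (Fin m))
  have hQ : ∀ Q : Set G,
      (Finset.univ.filter fun p : Fin m × Fin m => p.1 ≠ p.2 ∧ x p.1 - x p.2 ∈ Q).card
        = ∑ i : Fin m, ∑ j : Fin m, if i ≠ j ∧ x i - x j ∈ Q then 1 else 0 := by
    intro Q
    rw [Finset.card_filter, Fintype.sum_prod_type]
  rw [hQ F, hQ K]
  simpa [Finset.card_univ] using key
end

section
/- If x, y, z are three vectors in a real inner product space each of norm at least 1, then at least one of the pairwise sums x+y, x+z, y+z has norm at least 1. -/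
theorem stmt5 {V : Type*} [NormedAddCommGroup V] [InnerProductSpace ℝ V]
    (x y z : V) (hx : 1 ≤ ‖x‖) (hy : 1 ≤ ‖y‖) (hz : 1 ≤ ‖z‖) :
    1 ≤ ‖x + y‖ ∨ 1 ≤ ‖x + z‖ ∨ 1 ≤ ‖y + z‖ := by
  by_contra h
  push_neg at h
  obtain ⟨h1, h2, h3⟩ := h
  have e1 := norm_add_sq_real x y
  have e2 := norm_add_sq_real x z
  have e3 := norm_add_sq_real y z
  have e4 := norm_add_sq_real (x + y) z
  have e5 := norm_add_sq_real x y
  have hs : (0:ℝ) ≤ ‖x + y + z‖ ^ 2 := sq_nonneg _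
  have hin := inner_add_left x y z (𝕜 := ℝ)
  have n1 : (0:ℝ) ≤ ‖x + y‖ := norm_nonneg _
  have n2 : (0:ℝ) ≤ ‖x + z‖ := norm_nonneg _
  have n3 : (0:ℝ) ≤ ‖y + z‖ := norm_nonneg _
  nlinarith [sq_nonneg ‖x+y‖, sq_nonneg ‖x+z‖, sq_nonneg ‖y+z‖, sq_nonneg (‖x‖-1), sq_nonneg (‖y‖-1), sq_nonneg (‖z‖-1), mul_self_nonneg ‖x‖]
end

section
/- Let a, b > 0 be real numbers. For any i.i.d. real-valued random variables X and Y, (P(|X| ≤ b))² ≤ ⌈2b/a⌉ · P(|X − Y| ≤ a). -/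
open MeasureTheory ProbabilityTheory
open scoped ENNReal NNReal

lemma ennreal_two_mul_le_add_sq (x y : ℝ≥0∞) : 2 * (x * y) ≤ x ^ 2 + y ^ 2 := by
  rcases eq_or_ne x ⊤ with hx | hx
  · rcases eq_or_ne y 0 with hy | hy
    · simp [hy]
    · simp [hx, ENNReal.top_pow, ENNReal.top_mul hy]
  rcases eq_or_ne y (⊤ : ℝ≥0∞) with hy | hy
  · rcases eq_or_ne x 0 with hx0 | hx0
    · simp [hx0]
    · simp [hy, ENNReal.top_pow, ENNReal.mul_top hx0]
  lift x to ℝ≥0 using hx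
  lift y to ℝ≥0 using hy
  have h : 2 * (x * y) ≤ x ^ 2 + y ^ 2 := by
    rw [← NNReal.coe_le_coe]
    push_cast
    nlinarith [sq_nonneg ((x:ℝ) - y)]
  exact_mod_cast h

lemma ennreal_sq_sum_le (N : ℕ) (f : ℕ → ℝ≥0∞) :
    (∑ j ∈ Finset.range N, f j) ^ 2 ≤ N * ∑ j ∈ Finset.range N, f j ^ 2 := by
  have key : 2 * (∑ j ∈ Finset.range N, f j) ^ 2 ≤
      2 * (N * ∑ j ∈ Finset.range N, f j ^ 2) := by
    have h1 : (∑ j ∈ Finset.range N, f j) ^ 2 =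
        ∑ i ∈ Finset.range N, ∑ j ∈ Finset.range N, f i * f j := by
      rw [sq, Finset.sum_mul_sum]
    rw [h1, Finset.mul_sum]
    calc ∑ i ∈ Finset.range N, 2 * ∑ j ∈ Finset.range N, f i * f j
        = ∑ i ∈ Finset.range N, ∑ j ∈ Finset.range N, 2 * (f i * f j) := by
          simp [Finset.mul_sum]
      _ ≤ ∑ i ∈ Finset.range N, ∑ j ∈ Finset.range N, (f i ^ 2 + f j ^ 2) := by
          exact Finset.sum_le_sum fun i _ => Finset.sum_le_sum fun j _ =>
            ennreal_two_mul_le_add_sq _ _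
      _ = 2 * (N * ∑ j ∈ Finset.range N, f j ^ 2) := by
          simp [Finset.sum_add_distrib, Finset.mul_sum, two_mul, mul_comm]
  exact (ENNReal.mul_le_mul_iff_right (by norm_num) (by norm_num)).mp key

theorem stmt7 {Ω : Type*} [MeasurableSpace Ω] (μ : Measure Ω) [IsProbabilityMeasure μ]
    (a b : ℝ) (ha : 0 < a) (hb : 0 < b)
    (X Y : Ω → ℝ) (hX : Measurable X) (hY : Measurable Y)
    (hid : IdentDistrib X Y μ μ) (hind : IndepFun X Y μ) :
    (μ {ω | |X ω| ≤ b}) ^ 2 ≤ (⌈2 * b / a⌉₊ : ℝ≥0∞) * μ {ω | |X ω - Y ω| ≤ a} := by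
  set N := ⌈2 * b / a⌉₊ with hN
  have hNpos : 0 < N := Nat.ceil_pos.mpr (by positivity)
  -- the covering intervals
  set S : ℕ → Set ℝ := fun j =>
    if j = 0 then Set.Icc (-b) (-b + a) else Set.Ioc (-b + j * a) (-b + (j + 1) * a) with hS
  have hSmeas : ∀ j, MeasurableSet (S j) := by
    intro j
    by_cases h : j = 0 <;> simp [hS, h, measurableSet_Icc, measurableSet_Ioc]
  -- each interval is contained in a closed interval of length a
  have hSsub : ∀ j, S j ⊆ Set.Icc (-b + j * a) (-b + (j + 1) * a) := by
    intro j
    by_cases h : j = 0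
    · simp only [hS, h, if_pos]
      norm_num
    · simp only [hS, if_neg h]
      exact Set.Ioc_subset_Icc_self
  have hdiam : ∀ j, ∀ x ∈ S j, ∀ y ∈ S j, |x - y| ≤ a := by
    intro j x hx y hy
    have hx' := hSsub j hx
    have hy' := hSsub j hy
    rw [abs_le]
    constructor <;> nlinarith [hx'.1, hx'.2, hy'.1, hy'.2]
  -- disjointness
  have hdisj : ∀ i j, i < j → Disjoint (S i) (S j) := by
    intro i j hij
    rw [Set.disjoint_left]
    intro x hxi hxj
    have hj0 : j ≠ 0 := by omega
    have hxj' : -b + j * a < x := by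
      simp only [hS, if_neg hj0] at hxj
      exact hxj.1
    have hxi' : x ≤ -b + (i + 1) * a := (hSsub i hxi).2
    have hij' : (i : ℝ) + 1 ≤ j := by exact_mod_cast hij
    nlinarith
  -- cover
  have hcover : Set.Icc (-b) b ⊆ ⋃ j ∈ Finset.range N, S j := by
    intro x hx
    obtain ⟨hx1, hx2⟩ := hx
    simp only [Set.mem_iUnion, Finset.mem_range]
    by_cases h : x ≤ -b + a
    · refine ⟨0, hNpos, ?_⟩
      simp only [hS, if_pos rfl, Set.mem_Icc]
      exact ⟨hx1, h⟩
    · push_neg at h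
      set t : ℝ := (x + b) / a with ht
      have ht1 : 1 < t := by rw [ht, lt_div_iff₀ ha]; linarith
      set k := ⌈t⌉₊ with hk
      have hk2 : 2 ≤ k := by
        have : 1 < k := Nat.lt_ceil.mpr (by exact_mod_cast ht1)
        omega
      have hkN : k ≤ N := by
        apply Nat.ceil_le_ceil
        rw [ht, div_le_div_iff₀ ha ha]
        nlinarith
      refine ⟨k - 1, by omega, ?_⟩
      have hk1 : k - 1 ≠ 0 := by omega
      simp only [hS, if_neg hk1, Set.mem_Ioc]
      have hcast : ((k - 1 : ℕ) : ℝ) = (k : ℝ) - 1 := by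
        have : (1:ℕ) ≤ k := by omega
        push_cast [this]; ring
      constructor
      · -- -b + (k-1)*a < x
        rw [hcast]
        have : (k : ℝ) - 1 < t := by
          by_contra hcon
          push_neg at hcon
          have : k ≤ k - 1 := by
            have := Nat.ceil_le.mpr (show t ≤ ((k-1:ℕ):ℝ) by rw [hcast]; exact hcon)
            omega
          omega
        have h2 : ((k:ℝ) - 1) * a < x + b := (lt_div_iff₀ ha).mp this
        nlinarith
      · -- x ≤ -b + ((k-1)+1)*a
        rw [hcast]
        have hle : t ≤ (k : ℝ) := Nat.le_ceil t
        have := (div_le_iff₀ ha).mp hle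
        nlinarith
  -- disjointness for all distinct indices
  have hdisj' : ∀ i j, i ≠ j → Disjoint (S i) (S j) := by
    intro i j hij
    rcases lt_or_gt_of_ne hij with h | h
    · exact hdisj i j h
    · exact (hdisj j i h).symm
  set p : ℕ → ℝ≥0∞ := fun j => μ (X ⁻¹' S j) with hp
  have hXb : {ω | |X ω| ≤ b} = X ⁻¹' Set.Icc (-b) b := by
    ext ω; simp [abs_le]
  have step1 : μ {ω | |X ω| ≤ b} ≤ ∑ j ∈ Finset.range N, p j := by
    rw [hXb]
    calc μ (X ⁻¹' Set.Icc (-b) b) ≤ μ (⋃ j ∈ Finset.range N, X ⁻¹' S j) := by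
          apply measure_mono
          intro ω hω
          have := hcover hω
          simpa using this
      _ ≤ ∑ j ∈ Finset.range N, p j := measure_biUnion_finset_le _ _
  have step3 : ∀ j, p j ^ 2 = μ (X ⁻¹' S j ∩ Y ⁻¹' S j) := by
    intro j
    rw [hind.measure_inter_preimage_eq_mul _ _ (hSmeas j) (hSmeas j),
      (hid.measure_mem_eq (hSmeas j)).symm, sq]
  have step4 : ∑ j ∈ Finset.range N, μ (X ⁻¹' S j ∩ Y ⁻¹' S j) ≤ μ {ω | |X ω - Y ω| ≤ a} := by
    rw [← measure_biUnion_finset]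
    · apply measure_mono
      intro ω hω
      simp only [Set.mem_iUnion] at hω
      obtain ⟨j, _, hω1, hω2⟩ := hω
      exact hdiam j _ hω1 _ hω2
    · intro i _ j _ hij
      refine Set.disjoint_left.mpr fun ω hωi hωj => ?_
      exact Set.disjoint_left.mp (hdisj' i j hij) hωi.1 hωj.1
    · intro j _
      exact ((hSmeas j).preimage hX).inter ((hSmeas j).preimage hY)
  calc (μ {ω | |X ω| ≤ b}) ^ 2 ≤ (∑ j ∈ Finset.range N, p j) ^ 2 := by
        exact pow_le_pow_left₀ zero_le step1 2
    _ ≤ N * ∑ j ∈ Finset.range N, p j ^ 2 := ennreal_sq_sum_le N p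
    _ = N * ∑ j ∈ Finset.range N, μ (X ⁻¹' S j ∩ Y ⁻¹' S j) := by
        congr 1
        exact Finset.sum_congr rfl fun j _ => step3 j
    _ ≤ N * μ {ω | |X ω - Y ω| ≤ a} := by
        exact mul_le_mul_right step4 _
end
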